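/- arXiv:1308.4073 — 4 statements merged into one kernel-verified Lean document; each statement's English description precedes it below -/
import Mathlib

section
/- Let X, Ξ ∈ ℝ^{n×n} be real matrices with XᵀΞ = ΞᵀX and ker X ∩ ker Ξ = {0} (equivalently, the stacked 2n×n matrix with blocks X and Ξ has rank n). Let C ∈ ℂ^{n×n} be a complex symmetric matrix whose imaginary part Im C = (C − C̄)/(2i) is positive definite. Then the matrix Ξ − C X is invertible. -/
/-!
If `(Ξ - C X) v = 0`, put `w = X v`, so that `Ξ v = C w`. Since `X` is real,
`w* C w = v* Xᵀ Ξ v`, which is real because `XᵀΞ` is real symmetric. For complex symmetric `C`,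
the imaginary part of `w* C w` is `w* (Im C) w`, positive unless `w = 0`. Hence `X v = Ξ v = 0`,
and the real and imaginary parts of `v` both lie in `ker X ∩ ker Ξ = 0`.
-/

open Matrix ComplexOrder

namespace Matrix

variable {m n : Type*} [Fintype n]

lemma re_map_ofReal_mulVec (M : Matrix m n ℝ) (v : n → ℂ) (i : m) :
    ((M.map Complex.ofReal *ᵥ v) i).re = (M *ᵥ fun j => (v j).re) i := by
  simp [mulVec, dotProduct, Complex.re_sum]

lemma im_map_ofReal_mulVec (M : Matrix m n ℝ) (v : n → ℂ) (i : m) :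
    ((M.map Complex.ofReal *ᵥ v) i).im = (M *ᵥ fun j => (v j).im) i := by
  simp [mulVec, dotProduct, Complex.im_sum]

lemma re_star_dotProduct_map_ofReal_mulVec (M : Matrix n n ℝ) (x : n → ℂ) :
    (star x ⬝ᵥ M.map Complex.ofReal *ᵥ x).re =
      (fun i => (x i).re) ⬝ᵥ M *ᵥ (fun i => (x i).re) +
        (fun i => (x i).im) ⬝ᵥ M *ᵥ (fun i => (x i).im) := by
  simp only [dotProduct, mulVec, Complex.re_sum, Finset.mul_sum, ← Finset.sum_add_distrib]
  refine Finset.sum_congr rfl fun i _ => Finset.sum_congr rfl fun j _ => ?_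
  simp [Complex.mul_re, Complex.mul_im]

omit [Fintype n] in
lemma IsHermitian.map_ofReal {M : Matrix n n ℝ} (hM : M.IsHermitian) :
    (M.map Complex.ofReal).IsHermitian :=
  hM.map _ fun x => (Complex.conj_ofReal x).symm

lemma PosDef.map_ofReal {M : Matrix n n ℝ} (hM : M.PosDef) : (M.map Complex.ofReal).PosDef := by
  have hM' := hM.isHermitian.map_ofReal
  refine .of_dotProduct_mulVec_pos hM' fun x hx => ?_
  refine Complex.pos_iff.mpr ⟨?_, (hM'.im_star_dotProduct_mulVec_self x).symm⟩
  rw [re_star_dotProduct_map_ofReal_mulVec]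
  have hpos (y : n → ℝ) (hy : y ≠ 0) : 0 < y ⬝ᵥ M *ᵥ y := by
    simpa using hM.dotProduct_mulVec_pos hy
  have hnonneg (y : n → ℝ) : 0 ≤ y ⬝ᵥ M *ᵥ y := by
    simpa using hM.posSemidef.dotProduct_mulVec_nonneg y
  obtain hre | him : (fun i => (x i).re) ≠ 0 ∨ (fun i => (x i).im) ≠ 0 := by
    by_contra! h
    exact hx (funext fun i => Complex.ext (congrFun h.1 i) (congrFun h.2 i))
  · exact add_pos_of_pos_of_nonneg (hpos _ hre) (hnonneg _)
  · exact add_pos_of_nonneg_of_pos (hnonneg _) (hpos _ him)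

lemma im_star_dotProduct_mulVec_of_isSymm {C : Matrix n n ℂ} (hC : C.IsSymm) (x : n → ℂ) :
    (star x ⬝ᵥ C *ᵥ x).im = (star x ⬝ᵥ (C.map Complex.im).map Complex.ofReal *ᵥ x).re := by
  have hdecomp : C = (C.map Complex.re).map Complex.ofReal +
      Complex.I • (C.map Complex.im).map Complex.ofReal := by
    ext i j
    simp [Complex.ext_iff]
  have hre : (C.map Complex.re).IsHermitian := by
    rw [isHermitian_iff_isSymm, IsSymm, ← transpose_map, hC.eq]
  conv_lhs => rw [hdecomp]
  rw [add_mulVec, smul_mulVec, dotProduct_add, dotProduct_smul, Complex.add_im,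
    smul_eq_mul, Complex.I_mul_im, ← RCLike.im_to_complex,
    hre.map_ofReal.im_star_dotProduct_mulVec_self x, zero_add]

lemma map_ofReal_mulVec_eq_zero_iff (M : Matrix m n ℝ) (v : n → ℂ) :
    M.map Complex.ofReal *ᵥ v = 0 ↔
      M *ᵥ (fun i => (v i).re) = 0 ∧ M *ᵥ (fun i => (v i).im) = 0 := by
  simp only [funext_iff, Pi.zero_apply, Complex.ext_iff, re_map_ofReal_mulVec,
    im_map_ofReal_mulVec, Complex.zero_re, Complex.zero_im]
  exact forall_and

lemma star_dotProduct_map_ofReal_transpose_mul_mulVec [Fintype m] (X Y : Matrix m n ℝ) (v : n → ℂ) :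
    star v ⬝ᵥ (Xᵀ * Y).map Complex.ofReal *ᵥ v =
      star (X.map Complex.ofReal *ᵥ v) ⬝ᵥ Y.map Complex.ofReal *ᵥ v := by
  rw [star_mulVec, ← dotProduct_mulVec, mulVec_mulVec]
  congr 2
  ext i j
  simp [mul_apply]

end Matrix

/-- If `X, Ξ ∈ ℝ^{n×n}` satisfy `XᵀΞ = ΞᵀX` and `ker X ∩ ker Ξ = {0}`, and
`C ∈ ℂ^{n×n}` is complex symmetric with positive definite imaginary part, then `Ξ − C X`
is invertible. -/
theorem xi_sub_C_mul_X_isUnit (n : ℕ) (X Ξ : Matrix (Fin n) (Fin n) ℝ)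
    (hsym : Xᵀ * Ξ = Ξᵀ * X)
    (hker : ∀ v : Fin n → ℝ, X.mulVec v = 0 → Ξ.mulVec v = 0 → v = 0)
    (C : Matrix (Fin n) (Fin n) ℂ) (hC : Cᵀ = C)
    (hIm : (C.map Complex.im).PosDef) :
    IsUnit (Ξ.map (Complex.ofReal) - C * X.map (Complex.ofReal)) := by
  refine mulVec_injective_iff_isUnit.mp <|
    (injective_iff_map_eq_zero (mulVecLin _)).mpr fun v hv => ?_
  set w := X.map Complex.ofReal *ᵥ v
  have hΞv : Ξ.map Complex.ofReal *ᵥ v = C *ᵥ w := by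
    rwa [mulVecLin_apply, sub_mulVec, ← mulVec_mulVec, sub_eq_zero] at hv
  have hXΞ : (Xᵀ * Ξ).IsHermitian := by
    rw [isHermitian_iff_isSymm, IsSymm, transpose_mul, transpose_transpose, hsym]
  have hw : w = 0 := by
    by_contra hw
    have hpos := hIm.map_ofReal.re_dotProduct_pos hw
    rw [RCLike.re_to_complex, ← im_star_dotProduct_mulVec_of_isSymm hC, ← hΞv,
      ← star_dotProduct_map_ofReal_transpose_mul_mulVec, ← RCLike.im_to_complex,
      hXΞ.map_ofReal.im_star_dotProduct_mulVec_self] at hpos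
    exact hpos.false
  obtain ⟨hXre, hXim⟩ := (map_ofReal_mulVec_eq_zero_iff X v).mp hw
  obtain ⟨hΞre, hΞim⟩ := (map_ofReal_mulVec_eq_zero_iff Ξ v).mp (by rw [hΞv, hw, mulVec_zero])
  funext i
  exact Complex.ext (congrFun (hker _ hXre hΞre) i) (congrFun (hker _ hXim hΞim) i)
end

section
/- Let U ⊆ ℝⁿ × ℝⁿ be open, let x*, ξ* : U → ℝⁿ be smooth with (x*_η)ᵀξ* = 0 on U, and let φ : ℝⁿ × U → ℂ be smooth with φ(x*(y,η); y, η) = 0 and ∇_x φ(x*(y,η); y, η) = ξ*(y,η) for all (y,η) ∈ U. Then for all (y,η) ∈ U: ∇_η φ(x*(y,η); y, η) = 0 and φ_{ηη}(x*(y,η); y, η) = −(x*_η(y,η))ᵀ · φ_{xη}(x*(y,η); y, η). -/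
/-!
Differentiate the identities `φ(x*(p), p) = 0` and `∂_{η_l} φ(x*(p), p) = 0` along `η_k`:
by the chain rule, `∂_{η_k} F(x*, p) = -∑_i (x*_η)_{ik} ∂_{x_i} F(x*, p)` for any `F` vanishing on
the graph of `x*`. For `F = φ` the right side is `-((x*_η)ᵀ ξ*)_k = 0`, which makes `F = ∂_{η_l} φ`
admissible; symmetry of the second derivative then turns the resulting identity into the formula
for `φ_{ηη}`.
-/

open Matrix

/-- The continuous linear map `(u, v) ↦ A u + B v` on `ℝⁿ × ℝⁿ`; a map whose derivative at a
point has this form has `y`-Jacobian `A` and `η`-Jacobian `B` there. -/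
noncomputable def jacCLM {n : ℕ} (A B : Matrix (Fin n) (Fin n) ℝ) :
    ((Fin n → ℝ) × (Fin n → ℝ)) →L[ℝ] (Fin n → ℝ) :=
  LinearMap.toContinuousLinearMap
    (A.mulVecLin.comp (LinearMap.fst ℝ (Fin n → ℝ) (Fin n → ℝ)) +
      B.mulVecLin.comp (LinearMap.snd ℝ (Fin n → ℝ) (Fin n → ℝ)))

open Filter Topology

section

variable {𝕜 : Type*} [NontriviallyNormedField 𝕜]
  {E P G : Type*} [NormedAddCommGroup E] [NormedSpace 𝕜 E] [NormedAddCommGroup P]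
  [NormedSpace 𝕜 P] [NormedAddCommGroup G] [NormedSpace 𝕜 G]

theorem ContDiffAt.fderiv_fderiv_apply_comm {f : E → G} {x : E} {n : WithTop ℕ∞}
    (hf : ContDiffAt 𝕜 n f x) (hn : minSmoothness 𝕜 2 ≤ n) (a b : E) :
    fderiv 𝕜 (fun q => fderiv 𝕜 f q a) x b = fderiv 𝕜 (fun q => fderiv 𝕜 f q b) x a := by
  -- the Lie bracket of the constant vector fields `a` and `b` vanishes
  have h := VectorField.fderiv_apply_lieBracket hf hn (differentiableAt_const a)
    (differentiableAt_const b)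
  simp only [VectorField.lieBracket, fderiv_fun_const, Pi.zero_apply, _root_.zero_apply, sub_self,
    map_zero] at h
  exact sub_eq_zero.1 h.symm

theorem fderiv_apply_graph_eq_zero {F : E × P → G} {x : P → E} {X : P →L[𝕜] E} {p : P}
    (hF : DifferentiableAt 𝕜 F (x p, p)) (hx : HasFDerivAt x X p)
    (h0 : ∀ᶠ q in 𝓝 p, F (x q, q) = 0) (v : P) :
    fderiv 𝕜 F (x p, p) (X v, v) = 0 := by
  have hchain : HasFDerivAt (fun q => F (x q, q))
      ((fderiv 𝕜 F (x p, p)).comp (X.prod (ContinuousLinearMap.id 𝕜 P))) p :=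
    hF.hasFDerivAt.comp (f := fun q => (x q, q)) p (hx.prodMk (hasFDerivAt_id p))
  have hzero : HasFDerivAt (fun q => F (x q, q)) (0 : P →L[𝕜] G) p :=
    (hasFDerivAt_const 0 p).congr_of_eventuallyEq h0
  simpa using congrArg (· v) (hchain.unique hzero)

theorem ContinuousLinearMap.apply_prod_eq_sum_single {ι Q : Type*} [Fintype ι] [DecidableEq ι]
    [NormedAddCommGroup Q] [NormedSpace 𝕜 Q]
    (L : (ι → 𝕜) × Q →L[𝕜] G) (u : ι → 𝕜) (w : Q) :
    L (u, w) = ∑ i, u i • L (Pi.single i 1, 0) + L (0, w) := by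
  have hsplit : (u, w) = ((u, 0) : (ι → 𝕜) × Q) + (0, w) := by simp
  have hu : ((u, 0) : (ι → 𝕜) × Q) = ∑ i, u i • ((Pi.single i 1 : ι → 𝕜), (0 : Q)) := by
    conv_lhs => rw [pi_eq_sum_univ' u]
    ext <;> simp [Prod.fst_sum, Prod.snd_sum]
  rw [hsplit, map_add, hu, map_sum]
  simp only [map_smul]

end

theorem jacCLM_apply {n : ℕ} (A B : Matrix (Fin n) (Fin n) ℝ) (u v : Fin n → ℝ) :
    jacCLM A B (u, v) = A *ᵥ u + B *ᵥ v :=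
  rfl

theorem fderiv_eta_eq_neg_sum_of_graph_eq_zero {n : ℕ} {G : Type*} [NormedAddCommGroup G]
    [NormedSpace ℝ G] {F : (Fin n → ℝ) × (Fin n → ℝ) × (Fin n → ℝ) → G}
    {xs : (Fin n → ℝ) × (Fin n → ℝ) → Fin n → ℝ} {A B : Matrix (Fin n) (Fin n) ℝ}
    {p : (Fin n → ℝ) × (Fin n → ℝ)} (hF : DifferentiableAt ℝ F (xs p, p))
    (hxs : HasFDerivAt xs (jacCLM A B) p) (h0 : ∀ᶠ q in 𝓝 p, F (xs q, q) = 0) (k : Fin n) :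
    fderiv ℝ F (xs p, p) (0, 0, Pi.single k 1) =
      -∑ i, B i k • fderiv ℝ F (xs p, p) (Pi.single i 1, 0, 0) := by
  have h := fderiv_apply_graph_eq_zero hF hxs h0 (0, Pi.single k 1)
  rw [jacCLM_apply, ContinuousLinearMap.apply_prod_eq_sum_single] at h
  simpa [mulVec_single_one, eq_neg_iff_add_eq_zero, add_comm, Prod.mk_zero_zero] using h

theorem phase_eta_derivative_formulas_general (n : ℕ)
    (U : Set ((Fin n → ℝ) × (Fin n → ℝ))) (hUopen : IsOpen U)
    (xs ξs : (Fin n → ℝ) × (Fin n → ℝ) → Fin n → ℝ)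
    (Xy Xη : (Fin n → ℝ) × (Fin n → ℝ) → Matrix (Fin n) (Fin n) ℝ)
    (hdx : ∀ p ∈ U, HasFDerivAt xs (jacCLM (Xy p) (Xη p)) p)
    (hone : ∀ p ∈ U, (Xη p)ᵀ *ᵥ ξs p = 0)
    (φ : (Fin n → ℝ) × ((Fin n → ℝ) × (Fin n → ℝ)) → ℂ)
    (hφ : ContDiffOn ℝ (⊤ : ℕ∞) φ (Set.univ ×ˢ U))
    (h0 : ∀ p ∈ U, φ (xs p, p) = 0)
    (h1 : ∀ p ∈ U, ∀ i : Fin n,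
      fderiv ℝ φ (xs p, p) (Pi.single i 1, 0, 0) = (ξs p i : ℂ)) :
    ∀ p ∈ U,
      (∀ k : Fin n, fderiv ℝ φ (xs p, p) (0, 0, Pi.single k 1) = 0) ∧
      (∀ k l : Fin n,
        fderiv ℝ (fun q => fderiv ℝ φ q (0, 0, Pi.single k 1)) (xs p, p) (0, 0, Pi.single l 1) =
          -∑ i : Fin n, (Xη p i k : ℂ) *
            fderiv ℝ (fun q => fderiv ℝ φ q (Pi.single i 1, 0, 0)) (xs p, p)
              (0, 0, Pi.single l 1)) := by
  have hφ_at : ∀ p ∈ U, ContDiffAt ℝ 2 φ (xs p, p) := fun p hp =>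
    (hφ.contDiffAt ((isOpen_univ.prod hUopen).mem_nhds ⟨trivial, hp⟩)).of_le ENat.LEInfty.out
  have h_eta : ∀ p ∈ U, ∀ k, fderiv ℝ φ (xs p, p) (0, 0, Pi.single k 1) = 0 := by
    intro p hp k
    have hξ : ∑ i, Xη p i k * ξs p i = 0 := by
      simpa [mulVec, dotProduct] using congrFun (hone p hp) k
    rw [fderiv_eta_eq_neg_sum_of_graph_eq_zero ((hφ_at p hp).differentiableAt two_ne_zero)
      (hdx p hp) (eventually_of_mem (hUopen.mem_nhds hp) h0) k]
    simp_rw [h1 p hp, neg_eq_zero, ← Complex.ofReal_zero, ← hξ]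
    push_cast
    simp only [Complex.real_smul]
  intro p hp
  refine ⟨h_eta p hp, fun k l => ?_⟩
  have h_symm := (hφ_at p hp).fderiv_fderiv_apply_comm (by simp)
  have h_diff : DifferentiableAt ℝ (fun q => fderiv ℝ φ q (0, 0, Pi.single l 1)) (xs p, p) :=
    (((hφ_at p hp).fderiv_right (m := 1) le_rfl).clm_apply contDiffAt_const).differentiableAt
      one_ne_zero
  rw [h_symm, fderiv_eta_eq_neg_sum_of_graph_eq_zero h_diff (hdx p hp)
    (eventually_of_mem (hUopen.mem_nhds hp) fun q hq => h_eta q hq l) k]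
  congr 1
  refine Finset.sum_congr rfl fun i _ => ?_
  rw [Complex.real_smul, h_symm]

/-- If `(x*_η)ᵀ ξ* = 0` on `U` and the phase `φ` satisfies
`φ(x*(y,η); y, η) = 0`, `∇_x φ(x*(y,η); y, η) = ξ*(y,η)`, then
`∇_η φ(x*(y,η); y, η) = 0` and `φ_{ηη}(x*; y, η) = −(x*_η)ᵀ φ_{xη}(x*; y, η)`, entrywise:
the `(k,l)` entry of `φ_{ηη}` equals `−∑_i (x*_η)_{ik} (φ_{xη})_{il}`. -/
theorem phase_eta_derivative_formulas (n : ℕ)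
    (U : Set ((Fin n → ℝ) × (Fin n → ℝ))) (hUopen : IsOpen U)
    (xs ξs : (Fin n → ℝ) × (Fin n → ℝ) → Fin n → ℝ)
    (hxs : ContDiffOn ℝ (⊤ : ℕ∞) xs U) (hξs : ContDiffOn ℝ (⊤ : ℕ∞) ξs U)
    (Xy Xη : (Fin n → ℝ) × (Fin n → ℝ) → Matrix (Fin n) (Fin n) ℝ)
    (hdx : ∀ p ∈ U, HasFDerivAt xs (jacCLM (Xy p) (Xη p)) p)
    (hone : ∀ p ∈ U, (Xη p)ᵀ *ᵥ ξs p = 0)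
    (φ : (Fin n → ℝ) × ((Fin n → ℝ) × (Fin n → ℝ)) → ℂ)
    (hφ : ContDiffOn ℝ (⊤ : ℕ∞) φ (Set.univ ×ˢ U))
    (h0 : ∀ p ∈ U, φ (xs p, p) = 0)
    (h1 : ∀ p ∈ U, ∀ i : Fin n,
      fderiv ℝ φ (xs p, p) (Pi.single i 1, 0, 0) = (ξs p i : ℂ)) :
    ∀ p ∈ U,
      (∀ k : Fin n, fderiv ℝ φ (xs p, p) (0, 0, Pi.single k 1) = 0) ∧
      (∀ k l : Fin n,
        fderiv ℝ (fun q => fderiv ℝ φ q (0, 0, Pi.single k 1)) (xs p, p) (0, 0, Pi.single l 1) =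
          -∑ i : Fin n, (Xη p i k : ℂ) *
            fderiv ℝ (fun q => fderiv ℝ φ q (Pi.single i 1, 0, 0)) (xs p, p)
              (0, 0, Pi.single l 1)) :=
  phase_eta_derivative_formulas_general n U hUopen xs ξs Xy Xη hdx hone φ hφ h0 h1
end

section
/- Let C ∈ ℂ^{n×n} be complex symmetric (Cᵀ = C) whose real part Re C = (C + C̄)/2 is positive semidefinite, let m = dim_ℂ ker C, and let Π be the orthogonal projection (with respect to the standard Hermitian inner product) of ℂⁿ onto ker C. Then ε^{−m} det(C + εI) → det(C + Π) as ε → 0⁺ along real ε > 0. -/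
/-!
Since `C * P = 0` and `P * P = P`, for every scalar `t`
`C + t • 1 = (C + P + t • (1 - P)) * (t • P + (1 - P))`,
and the second factor has determinant `t ^ m`: it acts as `t` on `range P = ker C` and as the
identity on the complement `ker P`. So for `ε ≠ 0`,
`ε⁻ᵐ det (C + ε • 1) = det (C + P + ε • (1 - P))`, a polynomial in `ε` whose value at `0` is
`det (C + P)`.
-/

open Matrix LinearMap

theorem LinearMap.IsIdempotentElem.det_smul_add_smul_one_sub {K V : Type*} [Field K]
    [AddCommGroup V] [Module K V] [FiniteDimensional K V] {f : Module.End K V}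
    (hf : IsIdempotentElem f) (a b : K) :
    (a • f + b • (1 - f)).det =
      a ^ Module.finrank K (range f) * b ^ Module.finrank K (ker f) := by
  set e := (range f).prodEquivOfIsCompl (ker f) hf.isProj_range.isCompl
  have hconj : a • f + b • (1 - f) = e.conj (prodMap (a • 1) (b • 1)) := by
    conv_lhs =>
      rw [hf.isProj_range.eq_conj_prodMap, Module.End.one_eq_id, ← LinearEquiv.conj_id e]
    rw [← map_sub, ← map_smul, ← map_smul, ← map_add]
    congr 1
    ext <;> simp
  rw [hconj, LinearEquiv.conj_apply, comp_assoc, det_conj, det_prodMap, det_smul, det_smul,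
    map_one, map_one, mul_one, mul_one]

theorem Matrix.det_smul_add_smul_one_sub {K n : Type*} [Field K] [Fintype n] [DecidableEq n]
    {P : Matrix n n K} (hP : IsIdempotentElem P) (a b : K) :
    (a • P + b • (1 - P)).det =
      a ^ Module.finrank K (LinearMap.range P.mulVecLin) *
        b ^ Module.finrank K (LinearMap.ker P.mulVecLin) := by
  have hP' : IsIdempotentElem (toLin' P) := hP.map toLinAlgEquiv'
  rw [← LinearMap.det_toLin', map_add, map_smul, map_smul, map_sub, toLin'_one,
    ← Module.End.one_eq_id, hP'.det_smul_add_smul_one_sub]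
  rfl

theorem IsIdempotentElem.add_smul_one_eq_mul {R A : Type*} [CommRing R] [Ring A] [Algebra R A]
    {c p : A} (hp : IsIdempotentElem p) (hcp : c * p = 0) (t : R) :
    c + t • 1 = (c + p + t • (1 - p)) * (t • p + (1 - p)) := by
  simp only [add_mul, mul_add, mul_sub, sub_mul, smul_mul_assoc, mul_smul_comm, hcp, hp.eq,
    mul_one, one_mul]
  module

theorem det_plus_limit_general (n : ℕ) (C : Matrix (Fin n) (Fin n) ℂ)
    (P : Matrix (Fin n) (Fin n) ℂ)
    (hP1 : P * P = P)
    (hP3 : ∀ v : Fin n → ℂ, C.mulVec (P.mulVec v) = 0)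
    (hP4 : ∀ v : Fin n → ℂ, C.mulVec v = 0 → P.mulVec v = v) :
    Filter.Tendsto
      (fun ε : ℝ =>
        ((ε : ℂ) ^ (Module.finrank ℂ (LinearMap.ker C.mulVecLin)))⁻¹ *
          (C + (ε : ℂ) • 1).det)
      (nhdsWithin 0 (Set.Ioi 0)) (nhds (C + P).det) := by
  set m := Module.finrank ℂ (LinearMap.ker C.mulVecLin)
  have hP : IsIdempotentElem P := hP1
  have hCP : C * P = 0 := ext_iff_mulVec.mpr fun v => by simp [← mulVec_mulVec, hP3]
  have hrange : LinearMap.range P.mulVecLin = LinearMap.ker C.mulVecLin := by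
    ext v
    exact ⟨fun ⟨w, hw⟩ => hw ▸ hP3 w, fun hv => ⟨v, hP4 v hv⟩⟩
  have hdetP (t : ℂ) : (t • P + (1 - P)).det = t ^ m := by
    have hm : m = Module.finrank ℂ (LinearMap.range P.mulVecLin) := by rw [hrange]
    simpa [hm] using det_smul_add_smul_one_sub hP t 1
  have hfactor (ε : ℝ) (hε : ε ≠ 0) :
      (C + P + (ε : ℂ) • (1 - P)).det = ((ε : ℂ) ^ m)⁻¹ * (C + (ε : ℂ) • 1).det := by
    have hεm : (ε : ℂ) ^ m ≠ 0 := pow_ne_zero _ (Complex.ofReal_ne_zero.mpr hε)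
    rw [hP.add_smul_one_eq_mul hCP, det_mul, hdetP, eq_inv_mul_iff_mul_eq₀ hεm, mul_comm]
  have hcont : Continuous fun ε : ℝ => (C + P + (ε : ℂ) • (1 - P)).det := by fun_prop
  refine ((hcont.tendsto' 0 _ (by simp)).mono_left nhdsWithin_le_nhds).congr' ?_
  exact eventually_nhdsWithin_of_forall fun ε hε => hfactor ε (ne_of_gt hε)

/-- For a complex symmetric matrix `C` with positive semidefinite real part,
`m = dim ker C`, and `P` the orthogonal projection of `ℂⁿ` onto `ker C` (characterized by
being a Hermitian idempotent with range `ker C`), one has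
`ε^{−m} det(C + εI) → det(C + P)` as `ε → 0⁺`. -/
theorem det_plus_limit (n : ℕ) (C : Matrix (Fin n) (Fin n) ℂ) (hC : Cᵀ = C)
    (hRe : (C.map Complex.re).PosSemidef)
    (P : Matrix (Fin n) (Fin n) ℂ)
    (hP1 : P * P = P) (hP2 : P.IsHermitian)
    (hP3 : ∀ v : Fin n → ℂ, C.mulVec (P.mulVec v) = 0)
    (hP4 : ∀ v : Fin n → ℂ, C.mulVec v = 0 → P.mulVec v = v) :
    Filter.Tendsto
      (fun ε : ℝ =>
        ((ε : ℂ) ^ (Module.finrank ℂ (LinearMap.ker C.mulVecLin)))⁻¹ *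
          (C + (ε : ℂ) • 1).det)
      (nhdsWithin 0 (Set.Ioi 0)) (nhds (C + P).det) :=
  det_plus_limit_general n C P hP1 hP3 hP4
end

section
/- Let x⁰ ∈ ℝⁿ, let ξ⁰ ∈ ℝⁿ with ξ⁰ ≠ 0, and let A ∈ ℝ^{n×n} be symmetric. Then there exists a smooth map f : ℝⁿ → ℝⁿ and a neighbourhood of x⁰ on which f is a diffeomorphism onto its image, with f(x⁰) = x⁰ and Df(x⁰) = I, such that the cotangent lift F(x,ξ) = (f(x), (Df(x)ᵀ)⁻¹ξ) satisfies DF(x⁰,ξ⁰)(𝐱, A𝐱) = (𝐱, 0) for every 𝐱 ∈ ℝⁿ. In other words, the differential of F at (x⁰,ξ⁰) maps the Lagrangian subspace {(𝐱, A𝐱) : 𝐱 ∈ ℝⁿ} onto the horizontal subspace {(𝐱, 0) : 𝐱 ∈ ℝⁿ}. -/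
open Matrix

/-- The Jacobian matrix of a map `f : ℝⁿ → ℝⁿ` at a point. -/
noncomputable def jacMat {n : ℕ} (f : (Fin n → ℝ) → Fin n → ℝ) (x : Fin n → ℝ) :
    Matrix (Fin n) (Fin n) ℝ :=
  Matrix.of fun i j => fderiv ℝ f x (Pi.single j 1) i

/-! Choose `c` with `c ⬝ᵥ ξ⁰ = 1` and take `f x = x + ½ ⟨A (x - x⁰), x - x⁰⟩ c`. Its Jacobian
`1 + c (A (x - x⁰))ᵀ` is a rank-one perturbation of the identity, so by Sherman–Morrison
`(Df(x)ᵀ)⁻¹ ξ = ξ - (c ⬝ᵥ ξ) / (1 + c ⬝ᵥ A (x - x⁰)) • A (x - x⁰)`. The vector `A (x - x⁰)` vanishes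
at `x⁰`, so only its derivative `A` survives in `DF(x⁰, ξ⁰)`, which is `(X, Y) ↦ (X, Y - AX)`.
The local inverse comes from the inverse function theorem, restricted to the open set where `Df`
is invertible so that it is smooth on all of `f '' s`. -/

theorem ContDiff.exists_isOpen_leftInvOn_contDiffOn {𝕂 E F : Type*} [RCLike 𝕂]
    [NormedAddCommGroup E] [NormedSpace 𝕂 E] [CompleteSpace E]
    [NormedAddCommGroup F] [NormedSpace 𝕂 F] {f : E → F} {n : WithTop ℕ∞}
    (hf : ContDiff 𝕂 n f) (hn : n ≠ 0) {f' : E ≃L[𝕂] F} {a : E}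
    (hf' : HasFDerivAt f (f' : E →L[𝕂] F) a) :
    ∃ s, IsOpen s ∧ a ∈ s ∧ ∃ g, ContDiffOn 𝕂 n g (f '' s) ∧ Set.LeftInvOn g f s := by
  let e := hf.contDiffAt.toOpenPartialHomeomorph f hf' hn
  let U := fderiv 𝕂 f ⁻¹' Set.range ((↑) : (E ≃L[𝕂] F) → E →L[𝕂] F)
  have hU : IsOpen U := ContinuousLinearEquiv.isOpen.preimage (hf.continuous_fderiv hn)
  refine ⟨e.source ∩ U, e.open_source.inter hU,
    ⟨hf.contDiffAt.mem_toOpenPartialHomeomorph_source hf' hn, f', hf'.fderiv.symm⟩, e.symm, ?_,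
    fun x hx => e.left_inv hx.1⟩
  rintro _ ⟨x, ⟨hxe, g', hg'⟩, rfl⟩
  have hfx : HasFDerivAt f (g' : E →L[𝕂] F) (e.symm (f x)) := by
    change HasFDerivAt f (g' : E →L[𝕂] F) (e.symm (e x))
    rw [e.left_inv hxe, hg']
    exact (hf.differentiable hn x).hasFDerivAt
  exact (e.contDiffAt_symm (e.map_source hxe) hfx hf.contDiffAt).contDiffWithinAt

theorem HasFDerivAt.smul_of_eq_zero {𝕜 E F : Type*} [NontriviallyNormedField 𝕜]
    [NormedAddCommGroup E] [NormedSpace 𝕜 E] [NormedAddCommGroup F] [NormedSpace 𝕜 F]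
    {κ : E → 𝕜} {v : E → F} {v' : E →L[𝕜] F} {p : E} (hκ : DifferentiableAt 𝕜 κ p)
    (hv : HasFDerivAt v v' p) (hv0 : v p = 0) :
    HasFDerivAt (fun q => κ q • v q) (κ p • v') p := by
  simpa [hv0] using hκ.hasFDerivAt.fun_smul hv

section LinearAlgebra

variable {ι K : Type*} [Fintype ι] [DecidableEq ι] [Field K]

theorem Matrix.exists_dotProduct_eq_one {v : ι → K} (hv : v ≠ 0) : ∃ c : ι → K, c ⬝ᵥ v = 1 := by
  obtain ⟨i, hi⟩ := Function.ne_iff.mp hv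
  exact ⟨Pi.single i (v i)⁻¹, by simp [single_dotProduct, inv_mul_cancel₀ hi]⟩

theorem Matrix.inv_one_add_vecMulVec (u v : ι → K) (h : 1 + v ⬝ᵥ u ≠ 0) :
    (1 + vecMulVec u v)⁻¹ = 1 - (1 + v ⬝ᵥ u)⁻¹ • vecMulVec u v := by
  refine inv_eq_right_inv ?_
  rw [mul_sub, mul_one, add_mul, one_mul, mul_smul_comm, vecMulVec_mul_vecMulVec, vecMulVec_smul,
    smul_smul, add_sub_assoc, add_eq_left, sub_eq_zero]
  match_scalars
  field_simp

end LinearAlgebra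

section FlatteningMap

variable {ι : Type*} [Fintype ι]

theorem Matrix.IsSymm.mulVec_dotProduct_comm {A : Matrix ι ι ℝ} (hA : A.IsSymm) (v w : ι → ℝ) :
    A *ᵥ v ⬝ᵥ w = A *ᵥ w ⬝ᵥ v := by
  rw [dotProduct_comm, dotProduct_mulVec, ← mulVec_transpose, hA.eq]

theorem Matrix.IsSymm.hasFDerivAt_half_quadratic {A : Matrix ι ι ℝ} (hA : A.IsSymm)
    (x0 x : ι → ℝ) :
    HasFDerivAt (fun y => 2⁻¹ * (A *ᵥ (y - x0) ⬝ᵥ (y - x0)))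
      ((dotProductBilin ℝ ℝ).toContinuousBilinearMap (A *ᵥ (x - x0))) x := by
  have hsub : HasFDerivAt (fun y : ι → ℝ => y - x0) (ContinuousLinearMap.id ℝ _) x :=
    (hasFDerivAt_id x).sub_const x0
  have hmulVec := (LinearMap.toContinuousLinearMap A.mulVecLin).hasFDerivAt.comp x hsub
  refine (((dotProductBilin ℝ ℝ).toContinuousBilinearMap.hasFDerivAt_of_bilinear hmulVec
    hsub).const_mul 2⁻¹).congr_fderiv ?_
  ext v
  simp only [_root_.smul_apply, _root_.add_apply, ContinuousLinearMap.precompR_apply,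
    ContinuousLinearMap.precompL_apply, ContinuousLinearMap.compL_apply,
    ContinuousLinearMap.comp_apply, ContinuousLinearMap.id_apply,
    LinearMap.coe_toContinuousLinearMap', mulVecLin_apply, Function.comp_apply,
    LinearMap.toContinuousBilinearMap_apply, dotProductBilin_apply_apply, smul_eq_mul,
    hA.mulVec_dotProduct_comm v]
  ring

noncomputable def flatteningMap (A : Matrix ι ι ℝ) (x0 c x : ι → ℝ) : ι → ℝ :=
  x + (2⁻¹ * (A *ᵥ (x - x0) ⬝ᵥ (x - x0))) • c

variable {A : Matrix ι ι ℝ} (x0 c : ι → ℝ)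

theorem flatteningMap_self : flatteningMap A x0 c x0 = x0 := by
  simp [flatteningMap]

theorem contDiff_flatteningMap {k : WithTop ℕ∞} : ContDiff ℝ k (flatteningMap A x0 c) := by
  unfold flatteningMap
  simp only [dotProduct, mulVec]
  fun_prop

theorem hasFDerivAt_flatteningMap (hA : A.IsSymm) (x : ι → ℝ) :
    HasFDerivAt (flatteningMap A x0 c)
      (ContinuousLinearMap.id ℝ _ +
        ((dotProductBilin ℝ ℝ).toContinuousBilinearMap (A *ᵥ (x - x0))).smulRight c) x :=
  (hasFDerivAt_id x).add ((hA.hasFDerivAt_half_quadratic x0 x).smul_const c)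

theorem hasFDerivAt_flatteningMap_self (hA : A.IsSymm) :
    HasFDerivAt (flatteningMap A x0 c) (ContinuousLinearMap.id ℝ (ι → ℝ)) x0 := by
  simpa using hasFDerivAt_flatteningMap x0 c hA x0

end FlatteningMap

noncomputable def cotangentLift {n : ℕ} (f : (Fin n → ℝ) → Fin n → ℝ)
    (p : (Fin n → ℝ) × (Fin n → ℝ)) : (Fin n → ℝ) × (Fin n → ℝ) :=
  (f p.1, ((jacMat f p.1)ᵀ)⁻¹ *ᵥ p.2)

section CotangentLift

variable {n : ℕ} {A : Matrix (Fin n) (Fin n) ℝ} (x0 c : Fin n → ℝ)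

theorem jacMat_flatteningMap (hA : A.IsSymm) (x : Fin n → ℝ) :
    jacMat (flatteningMap A x0 c) x = 1 + vecMulVec c (A *ᵥ (x - x0)) := by
  ext i j
  simp [jacMat, (hasFDerivAt_flatteningMap x0 c hA x).fderiv, vecMulVec_apply, Pi.single_apply,
    one_apply, mul_comm]

theorem cotangentLift_flatteningMap (hA : A.IsSymm) {p : (Fin n → ℝ) × (Fin n → ℝ)}
    (hp : 1 + c ⬝ᵥ A *ᵥ (p.1 - x0) ≠ 0) :
    cotangentLift (flatteningMap A x0 c) p = (flatteningMap A x0 c p.1,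
      p.2 - ((1 + c ⬝ᵥ A *ᵥ (p.1 - x0))⁻¹ * (c ⬝ᵥ p.2)) • A *ᵥ (p.1 - x0)) := by
  rw [cotangentLift, jacMat_flatteningMap x0 c hA, transpose_add, transpose_one,
    transpose_vecMulVec, inv_one_add_vecMulVec _ _ hp, sub_mulVec, one_mulVec, smul_mulVec,
    vecMulVec_mulVec, op_smul_eq_smul, smul_smul]

theorem hasFDerivAt_cotangentLift_flatteningMap (hA : A.IsSymm) {ξ0 : Fin n → ℝ}
    (hc : c ⬝ᵥ ξ0 = 1) :
    HasFDerivAt (cotangentLift (flatteningMap A x0 c))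
      ((ContinuousLinearMap.fst ℝ _ _).prod (ContinuousLinearMap.snd ℝ _ _ -
        (LinearMap.toContinuousLinearMap A.mulVecLin).comp (ContinuousLinearMap.fst ℝ _ _)))
      (x0, ξ0) := by
  have hden : Continuous fun p : (Fin n → ℝ) × (Fin n → ℝ) => 1 + c ⬝ᵥ A *ᵥ (p.1 - x0) := by
    fun_prop
  have hlift : cotangentLift (flatteningMap A x0 c) =ᶠ[nhds (x0, ξ0)] fun p =>
      (flatteningMap A x0 c p.1,
        p.2 - ((1 + c ⬝ᵥ A *ᵥ (p.1 - x0))⁻¹ * (c ⬝ᵥ p.2)) • A *ᵥ (p.1 - x0)) :=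
    (hden.continuousAt.eventually_ne (by simp)).mono fun p hp =>
      cotangentLift_flatteningMap x0 c hA hp
  have hκ : DifferentiableAt ℝ (fun p : (Fin n → ℝ) × (Fin n → ℝ) =>
      (1 + c ⬝ᵥ A *ᵥ (p.1 - x0))⁻¹ * (c ⬝ᵥ p.2)) (x0, ξ0) := by
    refine DifferentiableAt.mul (DifferentiableAt.inv ?_ (by simp)) ?_ <;>
      simp only [dotProduct, mulVec] <;> fun_prop
  have hu : HasFDerivAt (fun p : (Fin n → ℝ) × (Fin n → ℝ) => A *ᵥ (p.1 - x0))
      ((LinearMap.toContinuousLinearMap A.mulVecLin).comp (ContinuousLinearMap.fst ℝ _ _))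
      (x0, ξ0) :=
    (LinearMap.toContinuousLinearMap A.mulVecLin).hasFDerivAt.comp _
      (hasFDerivAt_fst.sub_const x0)
  refine HasFDerivAt.congr_of_eventuallyEq ?_ hlift
  have := ((hasFDerivAt_flatteningMap_self x0 c hA).comp _ hasFDerivAt_fst).prodMk
    ((hasFDerivAt_snd (p := (x0, ξ0))).sub (HasFDerivAt.smul_of_eq_zero hκ hu (by simp)))
  simpa [hc] using this

end CotangentLift

/-- For `ξ⁰ ≠ 0` and `A` symmetric there is a smooth map `f`, a local
diffeomorphism near `x⁰` with `f(x⁰) = x⁰` and `Df(x⁰) = I`, whose cotangent lift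
`F(x,ξ) = (f(x), (Df(x)ᵀ)⁻¹ξ)` satisfies `DF(x⁰,ξ⁰)(𝐱, A𝐱) = (𝐱, 0)` for every `𝐱`,
i.e. `DF(x⁰,ξ⁰)` maps the Lagrangian subspace `{(𝐱, A𝐱)}` onto the horizontal subspace
`{(𝐱, 0)}`. -/
theorem exists_coordinates_flattening_lagrangian (n : ℕ) (x0 ξ0 : Fin n → ℝ)
    (hξ0 : ξ0 ≠ 0) (A : Matrix (Fin n) (Fin n) ℝ) (hA : A.IsSymm) :
    ∃ (f : (Fin n → ℝ) → Fin n → ℝ) (s : Set (Fin n → ℝ)) (g : (Fin n → ℝ) → Fin n → ℝ),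
      ContDiff ℝ (⊤ : ℕ∞) f ∧
      IsOpen s ∧ x0 ∈ s ∧
      ContDiffOn ℝ (⊤ : ℕ∞) g (f '' s) ∧ (∀ x ∈ s, g (f x) = x) ∧
      f x0 = x0 ∧
      fderiv ℝ f x0 = ContinuousLinearMap.id ℝ (Fin n → ℝ) ∧
      (∀ X : Fin n → ℝ,
        fderiv ℝ
            (fun p : (Fin n → ℝ) × (Fin n → ℝ) =>
              ((f p.1, ((jacMat f p.1)ᵀ)⁻¹ *ᵥ p.2) : (Fin n → ℝ) × (Fin n → ℝ)))
            (x0, ξ0) (X, A *ᵥ X) = (X, 0)) := by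
  obtain ⟨c, hc⟩ := exists_dotProduct_eq_one hξ0
  have hf : ContDiff ℝ (⊤ : ℕ∞) (flatteningMap A x0 c) := contDiff_flatteningMap x0 c
  have hf0 := hasFDerivAt_flatteningMap_self x0 c hA
  obtain ⟨s, hs, hx0s, g, hg, hgf⟩ :=
    hf.exists_isOpen_leftInvOn_contDiffOn (by simp) (f' := ContinuousLinearEquiv.refl ℝ _) hf0
  refine ⟨flatteningMap A x0 c, s, g, hf, hs, hx0s, hg, hgf, flatteningMap_self x0 c,
    hf0.fderiv, fun X => ?_⟩
  change fderiv ℝ (cotangentLift (flatteningMap A x0 c)) (x0, ξ0) (X, A *ᵥ X) = (X, 0)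
  rw [(hasFDerivAt_cotangentLift_flatteningMap x0 c hA hc).fderiv]
  simp
end
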